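/- arXiv:2504.12598 — 4 statements merged into one kernel-verified Lean document; each statement's English description precedes it below -/
import Mathlib

section
/- Let d be a positive integer and N = (N_1, …, N_d) with each N_i an integer greater than 1. For every real s ≥ 2, the number of vectors b ∈ ℤ^d such that max over a ∈ ℤ^d of |MAP_N(a, b)| ≥ s is at most ∏_{i=1}^{d} (4N_i/s + 1). -/
open scoped Pointwise BigOperators

noncomputable section

/-- The set system discrepancy: minimum over ±1 colorings of the maximum
imbalance of a set in the system. -/
def discSys {α : Type*} (𝒮 : Set (Set α)) : ℝ :=
  ⨅ χ : α → Bool, ⨆ S ∈ 𝒮, |∑ᶠ x ∈ S, (if χ x then (1 : ℝ) else -1)|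

/-- The arithmetic progression AP_d(a, b, ℓ) = {a + i b : 0 ≤ i < ℓ}. -/
def APset {d : ℕ} (a b : Fin d → ℤ) (ℓ : ℕ) : Set (Fin d → ℤ) :=
  { z | ∃ i : ℕ, i < ℓ ∧ z = a + (i : ℤ) • b }

/-- The grid [N₁] × ⋯ × [N_d]. -/
def OmegaN {d : ℕ} (N : Fin d → ℤ) : Set (Fin d → ℤ) :=
  { x | ∀ i, 1 ≤ x i ∧ x i ≤ N i }

/-- The family of arithmetic progressions restricted to the universe Ω. -/
def APsys {d : ℕ} (Ω : Set (Fin d → ℤ)) : Set (Set (Fin d → ℤ)) :=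
  { S | ∃ (a b : Fin d → ℤ) (ℓ : ℕ), 0 < ℓ ∧ S = Ω ∩ APset a b ℓ }

/-- f(N) = max over I ⊆ [d] of (∏_{i ∈ I} N_i)^(1/(2|I|+2)). -/
def fVec {d : ℕ} (N : Fin d → ℤ) : ℝ :=
  ⨆ I : Finset (Fin d), (∏ i ∈ I, (N i : ℝ)) ^ ((1 : ℝ) / (2 * (I.card : ℝ) + 2))

/-- A convex body: compact, convex, with nonempty interior. -/
def IsConvexBody {d : ℕ} (K : Set (Fin d → ℝ)) : Prop :=
  Convex ℝ K ∧ IsCompact K ∧ (interior K).Nonempty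

/-- The integer points in a subset of ℝ^d. -/
def intPoints {d : ℕ} (A : Set (Fin d → ℝ)) : Set (Fin d → ℤ) :=
  { x | (fun i => (x i : ℝ)) ∈ A }

/-- ζ_A(t) = number of integer points in t·A. -/
def zetaSet {d : ℕ} (A : Set (Fin d → ℝ)) (t : ℝ) : ℕ :=
  (intPoints (t • A)).ncard

/-- f(K) = √(s*) where s* = inf {s > 0 : ζ_{K−K}(1/s) ≤ s}. -/
def fBody {d : ℕ} (K : Set (Fin d → ℝ)) : ℝ :=
  Real.sqrt (sInf { s : ℝ | 0 < s ∧ (zetaSet (K - K) (1 / s) : ℝ) ≤ s })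

/-- γ₂ of the 0/1 incidence matrix of the set system 𝒮 with columns indexed by the
universe Ω: the infimum over factorizations of the product of the max row norm of the
left factor and max column norm of the right factor. -/
def gamma2S {α : Type*} (Ω : Set α) (𝒮 : Set (Set α)) : ℝ :=
  sInf { c : ℝ | ∃ (k : ℕ) (L : 𝒮 → Fin k → ℝ) (R : Fin k → Ω → ℝ),
    (∀ (S : 𝒮) (x : Ω), (∑ t, L S t * R t x) =
        Set.indicator (S : Set α) (fun _ => (1 : ℝ)) (x : α)) ∧
    c = (⨆ S : 𝒮, Real.sqrt (∑ t, L S t ^ 2)) * (⨆ x : Ω, Real.sqrt (∑ t, R t x ^ 2)) }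

/-- γ₂ of a real matrix. -/
def gamma2M {m n : ℕ} (A : Matrix (Fin m) (Fin n) ℝ) : ℝ :=
  sInf { c : ℝ | ∃ (k : ℕ) (L : Matrix (Fin m) (Fin k) ℝ) (R : Matrix (Fin k) (Fin n) ℝ),
    A = L * R ∧
    c = (⨆ i : Fin m, Real.sqrt (∑ t, L i t ^ 2)) * (⨆ j : Fin n, Real.sqrt (∑ t, R t j ^ 2)) }

/-- Prefix discrepancy of a matrix. -/
def pdiscM {m n : ℕ} (A : Matrix (Fin m) (Fin n) ℝ) : ℝ :=
  ⨅ x : Fin n → Bool, ⨆ j : Fin n, ⨆ r : Fin m,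
    |∑ i ∈ Finset.univ.filter (fun i : Fin n => i ≤ j),
        (if x i then (1 : ℝ) else -1) * A r i|

/-- Prefix discrepancy of a set system on universe Ω with respect to the ordering σ. -/
def pdiscS {α : Type*} (Ω : Set α) (𝒮 : Set (Set α)) (σ : α → ℕ) : ℝ :=
  ⨅ χ : α → Bool, ⨆ j : ℕ, ⨆ S ∈ 𝒮,
    |∑ᶠ x ∈ {y ∈ Ω | y ∈ S ∧ σ y ≤ j}, (if χ x then (1 : ℝ) else -1)|

/-- The maximal arithmetic progression in Ω_N with difference b through a:
the residue class of a mod b intersected with Ω_N. -/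
def MAPN {d : ℕ} (N : Fin d → ℤ) (a b : Fin d → ℤ) : Set (Fin d → ℤ) :=
  { z | ∃ i : ℤ, z = a + i • b } ∩ OmegaN N

/-- The maximal arithmetic progression inside the convex body K with difference b
through a: the residue class of a mod b intersected with the integer points of K. -/
def MAPK {d : ℕ} (K : Set (Fin d → ℝ)) (a b : Fin d → ℤ) : Set (Fin d → ℤ) :=
  { z | ∃ i : ℤ, z = a + i • b } ∩ intPoints K

/-- The lexicographic order on ℤ^d. -/
def lexLe {d : ℕ} (x y : Fin d → ℤ) : Prop :=
  x = y ∨ ∃ i : Fin d, (∀ j : Fin d, j < i → x j = y j) ∧ x i < y i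

end

/-!
If the maximal progression `MAPN N a b` has `n` points `a + i • b`, their indices spread over an
interval of length at least `n - 1`, so in every coordinate `(n - 1) * |b j|` is at most the width
`N j - 1` of the grid. For `n ≥ s ≥ 2` this confines `b j` to `|b j| ≤ 2 N j / s`, a box containing
at most `∏ j, (4 N j / s + 1)` integer points.
-/

open Finset

theorem Int.card_le_max'_sub_min'_add_one (t : Finset ℤ) (ht : t.Nonempty) :
    (#t : ℤ) ≤ t.max' ht - t.min' ht + 1 := by
  have hsub : t ⊆ Icc (t.min' ht) (t.max' ht) := fun x hx =>
    mem_Icc.mpr ⟨min'_le _ _ hx, le_max' _ _ hx⟩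
  have hcard := Nat.cast_le (α := ℤ) |>.mpr (card_le_card hsub)
  rw [Int.card_Icc_of_le _ _ (by linarith [min'_le_max' t ht])] at hcard
  linarith

theorem ncard_le_prod_two_mul_add_one {ι : Type*} [Fintype ι] [DecidableEq ι]
    (X : ι → ℝ) (hX : ∀ j, 0 ≤ X j) (S : Set (ι → ℤ)) (hS : ∀ b ∈ S, ∀ j, |(b j : ℝ)| ≤ X j) :
    (S.ncard : ℝ) ≤ ∏ j, (2 * X j + 1) := by
  set box := Fintype.piFinset fun j => Icc (-⌊X j⌋) ⌊X j⌋
  have hsub : S ⊆ box := by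
    intro b hb
    simp only [box, mem_coe, Fintype.mem_piFinset, mem_Icc]
    intro j
    have hbj := abs_le.mp (hS b hb j)
    constructor
    · rw [neg_le, Int.le_floor]
      push_cast
      linarith
    · exact Int.le_floor.mpr hbj.2
  calc (S.ncard : ℝ) ≤ #box := by
        exact_mod_cast (Set.ncard_le_ncard hsub box.finite_toSet).trans_eq (Set.ncard_coe_finset _)
    _ = ∏ j, ((2 * ⌊X j⌋ + 1 : ℤ) : ℝ) := by
        rw [Fintype.card_piFinset, Nat.cast_prod]
        refine prod_congr rfl fun j _ => ?_
        have hfloor : 0 ≤ ⌊X j⌋ := Int.floor_nonneg.mpr (hX j)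
        rw [← Int.cast_natCast, Int.card_Icc_of_le _ _ (by linarith)]
        push_cast
        ring
    _ ≤ ∏ j, (2 * X j + 1) := by
        refine prod_le_prod (fun j _ => ?_) (fun j _ => ?_)
        · have := Int.floor_nonneg.mpr (hX j)
          positivity
        · push_cast
          linarith [Int.floor_le (X j)]

section MaximalProgressions

variable {d : ℕ} {N : Fin d → ℤ}

theorem OmegaN_finite (N : Fin d → ℤ) : (OmegaN N).Finite :=
  (Set.Finite.pi fun i => Set.finite_Icc 1 (N i)).subset fun _ hx i _ => hx i

theorem abs_sub_le_of_mem_OmegaN {x y : Fin d → ℤ} (hx : x ∈ OmegaN N) (hy : y ∈ OmegaN N)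
    (j : Fin d) : |x j - y j| ≤ N j - 1 := by
  have := hx j
  have := hy j
  rw [abs_le]
  constructor <;> linarith

theorem MAPN_eq_image (N a b : Fin d → ℤ) :
    MAPN N a b = (fun i : ℤ => a + i • b) '' {i | a + i • b ∈ OmegaN N} := by
  ext z
  constructor
  · rintro ⟨⟨i, rfl⟩, hz⟩
    exact ⟨i, hz, rfl⟩
  · rintro ⟨i, hi, rfl⟩
    exact ⟨⟨i, rfl⟩, hi⟩

theorem ncard_MAPN_sub_one_mul_abs_le {a b : Fin d → ℤ} (hne : (MAPN N a b).Nonempty)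
    (j : Fin d) : ((MAPN N a b).ncard - 1 : ℤ) * |b j| ≤ N j - 1 := by
  obtain ⟨z, ⟨i, rfl⟩, hz⟩ := hne
  rcases eq_or_ne b 0 with rfl | hb
  · simpa using (hz j).1.trans (hz j).2
  obtain ⟨k, hk⟩ := Function.ne_iff.mp hb
  have hinj : Function.Injective fun i : ℤ => a + i • b := fun i i' h =>
    mul_right_cancel₀ hk (by simpa using congrFun h k)
  set I := {i : ℤ | a + i • b ∈ OmegaN N}
  have hIfin : I.Finite := (OmegaN_finite N).preimage hinj.injOn
  have hIne : hIfin.toFinset.Nonempty := by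
    rw [Set.Finite.toFinset_nonempty]
    exact ⟨i, hz⟩
  set i₀ := hIfin.toFinset.min' hIne
  set i₁ := hIfin.toFinset.max' hIne
  have hspread : ((MAPN N a b).ncard : ℤ) ≤ i₁ - i₀ + 1 := by
    rw [MAPN_eq_image, Set.ncard_image_of_injective _ hinj, Set.ncard_eq_toFinset_card _ hIfin]
    exact Int.card_le_max'_sub_min'_add_one _ hIne
  have hwidth : |(i₁ - i₀) * b j| ≤ N j - 1 := by
    have h₀ : i₀ ∈ I := hIfin.mem_toFinset.mp (min'_mem _ _)
    have h₁ : i₁ ∈ I := hIfin.mem_toFinset.mp (max'_mem _ _)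
    simpa [sub_mul] using abs_sub_le_of_mem_OmegaN h₁ h₀ j
  calc ((MAPN N a b).ncard - 1 : ℤ) * |b j| ≤ (i₁ - i₀) * |b j| :=
        mul_le_mul_of_nonneg_right (by linarith) (abs_nonneg _)
    _ = |(i₁ - i₀) * b j| := by
        rw [abs_mul, abs_of_nonneg (sub_nonneg.mpr (min'_le_max' _ hIne))]
    _ ≤ N j - 1 := hwidth

end MaximalProgressions

theorem stmt8_general (d : ℕ) (N : Fin d → ℤ) (hN : ∀ i, 1 < N i)
    (s : ℝ) (hs : 2 ≤ s) :
    ({b : Fin d → ℤ | ∃ a : Fin d → ℤ, s ≤ ((MAPN N a b).ncard : ℝ)}.ncard : ℝ) ≤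
      ∏ i, (4 * (N i : ℝ) / s + 1) := by
  have hs0 : 0 < s := by linarith
  have hN0 (j : Fin d) : (0 : ℝ) ≤ N j := by exact_mod_cast (zero_lt_one.trans (hN j)).le
  refine (ncard_le_prod_two_mul_add_one (fun j => 2 * N j / s)
    (fun j => div_nonneg (mul_nonneg zero_le_two (hN0 j)) hs0.le) _ ?_).trans_eq
    (prod_congr rfl fun j _ => by ring)
  rintro b ⟨a, ha⟩ j
  have hne : (MAPN N a b).Nonempty :=
    Set.nonempty_of_ncard_ne_zero fun h => by rw [h, Nat.cast_zero] at ha; linarith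
  have hwidth : (((MAPN N a b).ncard : ℝ) - 1) * |(b j : ℝ)| ≤ N j - 1 := by
    exact_mod_cast ncard_MAPN_sub_one_mul_abs_le hne j
  rw [le_div_iff₀ hs0]
  calc |(b j : ℝ)| * s ≤ 2 * ((s - 1) * |(b j : ℝ)|) := by nlinarith [abs_nonneg (b j : ℝ)]
    _ ≤ 2 * ((((MAPN N a b).ncard : ℝ) - 1) * |(b j : ℝ)|) := by gcongr
    _ ≤ 2 * N j := by linarith

/-- for s ≥ 2, the number of differences b ∈ ℤ^d admitting a maximal AP in
Ω_N with at least s elements is at most ∏ᵢ (4Nᵢ/s + 1). -/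
theorem stmt8 (d : ℕ) (hd : 0 < d) (N : Fin d → ℤ) (hN : ∀ i, 1 < N i)
    (s : ℝ) (hs : 2 ≤ s) :
    ({b : Fin d → ℤ | ∃ a : Fin d → ℤ, s ≤ ((MAPN N a b).ncard : ℝ)}.ncard : ℝ) ≤
      ∏ i, (4 * (N i : ℝ) / s + 1) :=
  stmt8_general d N hN s hs
end

section
/- Let K ⊆ ℝ^d be a convex body, and let M_K := {MAP_K(a, b) : a, b ∈ ℤ^d} be the set system of all maximal arithmetic progressions inside K. Then γ₂(M_K) ≤ √2 · f(K). -/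
open scoped Pointwise BigOperators

/-!
Fix `s` with `ζ_{K-K}(1/s) ≤ s`. A maximal progression with difference `b` and at least `s + 1`
points has two points whose indices differ by at least `s`, so by convexity `s • b ∈ K - K`:
the differences of long progressions are among the `ζ_{K-K}(1/s) - 1 ≤ s - 1` nonzero integer
points of `(1/s) • (K - K)`. Short sets are factored through the identity. A long set `S` with
difference `b` is factored through the coordinates `(b, x)`, `x ∈ S`, with weights
`√((s + 1) / |S|)` on the left and `1 / √((s + 1) |MAP(x, b)|)` on the right; as the progressions
with a fixed difference partition `ℤ^d ∩ K`, each column collects `1 / (s + 1)` per difference.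
Rows then have squared norm at most `s + 1` and columns at most `2s / (s + 1)`, so
`γ₂ ≤ √(2s)`; taking the infimum over `s` gives `√2 · f(K)`.
-/

section Factorization

variable {α : Type*} {Ω : Set α} {𝒮 : Set (Set α)}

theorem gamma2S_le_of_factorization {ι : Type*} [Fintype ι] (L : 𝒮 → ι → ℝ) (R : ι → Ω → ℝ)
    (hLR : ∀ (S : 𝒮) (x : Ω), ∑ i, L S i * R i x = (S : Set α).indicator (fun _ => 1) x)
    {p q : ℝ} (hL : ∀ S, ∑ i, L S i ^ 2 ≤ p) (hR : ∀ x, ∑ i, R i x ^ 2 ≤ q) :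
    gamma2S Ω 𝒮 ≤ √p * √q := by
  set e := Fintype.equivFin ι
  have hbdd : ∀ S, √(∑ t, L S (e.symm t) ^ 2) ≤ √p := fun S =>
    Real.sqrt_le_sqrt ((e.symm.sum_comp fun i => L S i ^ 2).trans_le (hL S))
  have hbdd' : ∀ x, √(∑ t, R (e.symm t) x ^ 2) ≤ √q := fun x =>
    Real.sqrt_le_sqrt ((e.symm.sum_comp fun i => R i x ^ 2).trans_le (hR x))
  unfold gamma2S
  refine le_trans (csInf_le ⟨0, ?_⟩ ⟨_, fun S t => L S (e.symm t), fun t x => R (e.symm t) x,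
    fun S x => (e.symm.sum_comp fun i => L S i * R i x).trans (hLR S x), rfl⟩) ?_
  · rintro c ⟨k, L', R', -, rfl⟩
    exact mul_nonneg (Real.iSup_nonneg fun _ => Real.sqrt_nonneg _)
      (Real.iSup_nonneg fun _ => Real.sqrt_nonneg _)
  · exact mul_le_mul (Real.iSup_le hbdd (Real.sqrt_nonneg _))
      (Real.iSup_le hbdd' (Real.sqrt_nonneg _)) (Real.iSup_nonneg fun _ => Real.sqrt_nonneg _)
      (Real.sqrt_nonneg _)

end Factorization

open Classical in
theorem Set.sum_ite_coe_mem {α : Type*} {Ω S : Set α} [Fintype Ω] (h : S ⊆ Ω) (c : ℝ) :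
    ∑ x : Ω, (if (x : α) ∈ S then c else 0) = S.ncard * c := by
  rw [Finset.sum_ite, Finset.sum_const_zero, add_zero, Finset.sum_const, nsmul_eq_mul,
    ← Set.ncard_preimage_of_injective_subset_range (f := ((↑) : Ω → α)) Subtype.val_injective
      (by rwa [Subtype.range_coe]),
    ← Nat.card_coe_set_eq, ← Fintype.card_subtype, ← Nat.card_eq_fintype_card]
  rfl

open Classical in
theorem Finset.sum_ite_coe_eq {β : Type*} {B : Finset β} {v : β} (hv : v ∈ B) (c : ℝ) :
    ∑ b : B, (if (b : β) = v then c else 0) = c := by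
  rw [Finset.sum_coe_sort B fun b => if b = v then c else 0, Finset.sum_ite_eq', if_pos hv]

/-- For each `b`, the sets `P b x` are the blocks of a partition of `Ω`, `P b x` being the block
of `x`. -/
structure IsPartitionFamily {α β : Type*} (Ω : Set α) (P : β → α → Set α) : Prop where
  subset : ∀ b x, P b x ⊆ Ω
  mem_self : ∀ b, ∀ x ∈ Ω, x ∈ P b x
  eq_of_mem : ∀ {b x y}, y ∈ P b x → P b y = P b x

namespace IsPartitionFamily

variable {α β : Type*} {Ω : Set α} {P : β → α → Set α}

theorem mem_comm (hP : IsPartitionFamily Ω P) {b : β} {x y : α} (hx : x ∈ Ω) (hy : y ∈ Ω) :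
    y ∈ P b x ↔ x ∈ P b y :=
  ⟨fun h => hP.eq_of_mem h ▸ hP.mem_self b x hx, fun h => hP.eq_of_mem h ▸ hP.mem_self b y hy⟩

theorem ncard_pos [Finite Ω] (hP : IsPartitionFamily Ω P) (b : β) {x : α} (hx : x ∈ Ω) :
    0 < (P b x).ncard :=
  (Set.ncard_pos ((Set.toFinite Ω).subset (hP.subset b x))).2 ⟨x, hP.mem_self b x hx⟩

end IsPartitionFamily

section ClassFactorization

variable {α β : Type*} (Ω : Set α) {𝒮 : Set (Set α)} (s : ℝ) (B : Finset β)

open Classical in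
noncomputable def classFactorLeft (σ : 𝒮 → β) (S : 𝒮) : Ω ⊕ (B × Ω) → ℝ
  | .inl x => if (S : Set α).ncard < s + 1 ∧ (x : α) ∈ (S : Set α) then 1 else 0
  | .inr (b, x) =>
    if s + 1 ≤ (S : Set α).ncard ∧ (b : β) = σ S ∧ (x : α) ∈ (S : Set α) then
      √((s + 1) / (S : Set α).ncard) else 0

open Classical in
noncomputable def classFactorRight (P : β → α → Set α) : Ω ⊕ (B × Ω) → Ω → ℝ
  | .inl x, y => if x = y then 1 else 0
  | .inr (b, x), y => if (y : α) ∈ P b x then 1 / √((s + 1) * (P b x).ncard) else 0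

variable [Fintype Ω] {Ω s B} {P : β → α → Set α} {σ : 𝒮 → β}

theorem sum_classFactorLeft_mul_classFactorRight (hs : 0 ≤ s)
    (hσ : ∀ S : 𝒮, ∀ x ∈ (S : Set α), P (σ S) x = S) (hΩ : ∀ S ∈ 𝒮, S ⊆ Ω)
    (hB : ∀ S : 𝒮, s + 1 ≤ (S : Set α).ncard → σ S ∈ B) (S : 𝒮) (y : Ω) :
    ∑ i, classFactorLeft Ω s B σ S i * classFactorRight Ω s B P i y =
      (S : Set α).indicator (fun _ => 1) y := by
  classical
  rw [Fintype.sum_sum_type, Fintype.sum_prod_type_right]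
  by_cases hl : s + 1 ≤ (S : Set α).ncard
  · have hn : (0 : ℝ) < (S : Set α).ncard := by linarith
    have hweight : √((s + 1) / (S : Set α).ncard) * (1 / √((s + 1) * (S : Set α).ncard)) =
        1 / (S : Set α).ncard := by
      rw [Real.sqrt_div' _ hn.le, Real.sqrt_mul' _ hn.le]
      field_simp
      rw [Real.sq_sqrt hn.le]
    have hterm : ∀ (x : Ω) (b : B),
        classFactorLeft Ω s B σ S (.inr (b, x)) * classFactorRight Ω s B P (.inr (b, x)) y =
          if (b : β) = σ S then
            (if (x : α) ∈ (S : Set α) then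
              (S : Set α).indicator (fun _ => 1) y / ((S : Set α).ncard : ℝ) else 0)
          else 0 := by
      intro x b
      by_cases hb : (b : β) = σ S
      · by_cases hx : (x : α) ∈ (S : Set α)
        · by_cases hy : (y : α) ∈ (S : Set α)
          · simpa only [classFactorLeft, classFactorRight, hb, hσ S x hx, hl, hx, hy, and_self,
              ↓reduceIte, Set.indicator_of_mem] using hweight
          · simp [classFactorLeft, classFactorRight, hb, hσ S x hx, hy]
        · simp [classFactorLeft, hb, hx]
      · simp [classFactorLeft, hb]
    have hshort : ∀ x : Ω,
        classFactorLeft Ω s B σ S (.inl x) * classFactorRight Ω s B P (.inl x) y = 0 := by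
      simp [classFactorLeft, not_lt.2 hl]
    simp only [hshort, hterm, Finset.sum_const_zero, zero_add]
    simp only [Finset.sum_ite_coe_eq (hB S hl)]
    rw [Set.sum_ite_coe_mem (hΩ S S.2)]
    field_simp
  · simp [classFactorLeft, classFactorRight, hl, lt_of_not_ge hl, Set.indicator_apply]

theorem sum_classFactorLeft_sq_le (hs : 0 ≤ s) (hΩ : ∀ S ∈ 𝒮, S ⊆ Ω)
    (hB : ∀ S : 𝒮, s + 1 ≤ (S : Set α).ncard → σ S ∈ B) (S : 𝒮) :
    ∑ i, classFactorLeft Ω s B σ S i ^ 2 ≤ s + 1 := by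
  classical
  rw [Fintype.sum_sum_type, Fintype.sum_prod_type_right]
  by_cases hl : s + 1 ≤ (S : Set α).ncard
  · have hn : (0 : ℝ) < (S : Set α).ncard := by linarith
    have hterm : ∀ (x : Ω) (b : B), classFactorLeft Ω s B σ S (.inr (b, x)) ^ 2 =
        if (b : β) = σ S then
          (if (x : α) ∈ (S : Set α) then (s + 1) / ((S : Set α).ncard : ℝ) else 0)
        else 0 := by
      intro x b
      by_cases hb : (b : β) = σ S <;> by_cases hx : (x : α) ∈ (S : Set α) <;>
        simp [classFactorLeft, hl, hb, hx, div_pow, Real.sq_sqrt hn.le,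
          Real.sq_sqrt (by linarith : 0 ≤ s + 1)]
    have hshort : ∀ x : Ω, classFactorLeft Ω s B σ S (.inl x) ^ 2 = 0 := by
      simp [classFactorLeft, not_lt.2 hl]
    simp only [hshort, hterm, Finset.sum_const_zero, zero_add]
    simp only [Finset.sum_ite_coe_eq (hB S hl)]
    rw [Set.sum_ite_coe_mem (hΩ S S.2)]
    rw [mul_div_cancel₀ _ hn.ne']
  · have hterm : ∀ x : Ω, classFactorLeft Ω s B σ S (.inl x) ^ 2 =
        if (x : α) ∈ (S : Set α) then 1 else 0 := by
      intro x
      by_cases hx : (x : α) ∈ (S : Set α) <;> simp [classFactorLeft, lt_of_not_ge hl, hx]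
    have hlong : ∀ (x : Ω) (b : B), classFactorLeft Ω s B σ S (.inr (b, x)) ^ 2 = 0 := by
      simp [classFactorLeft, hl]
    simp only [hterm, hlong, Finset.sum_const_zero, add_zero]
    rw [Set.sum_ite_coe_mem (hΩ S S.2), mul_one]
    exact (lt_of_not_ge hl).le

theorem sum_classFactorRight_sq (hP : IsPartitionFamily Ω P) (hs : 0 ≤ s) (y : Ω) :
    ∑ i, classFactorRight Ω s B P i y ^ 2 = 1 + B.card / (s + 1) := by
  classical
  rw [Fintype.sum_sum_type, Fintype.sum_prod_type]
  have hdiag : ∑ x : Ω, classFactorRight Ω s B P (.inl x) y ^ 2 = 1 := by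
    simp [classFactorRight]
  have hclass : ∀ b : B, ∑ x : Ω, classFactorRight Ω s B P (.inr (b, x)) y ^ 2 = 1 / (s + 1) := by
    intro b
    have hm : (0 : ℝ) < (P b y).ncard := by exact_mod_cast hP.ncard_pos b y.2
    have hterm : ∀ x : Ω, classFactorRight Ω s B P (.inr (b, x)) y ^ 2 =
        if (x : α) ∈ P b y then 1 / ((s + 1) * (P b y).ncard) else 0 := by
      intro x
      by_cases hx : (x : α) ∈ P b y
      · have hyx : (y : α) ∈ P b x := (hP.mem_comm x.2 y.2).2 hx
        simp [classFactorRight, hx, hP.mem_self b y y.2, ← hP.eq_of_mem hyx, mul_pow, inv_pow,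
          Real.sq_sqrt hm.le, Real.sq_sqrt (by linarith : 0 ≤ s + 1)]
      · have hyx : (y : α) ∉ P b x := fun h => hx ((hP.mem_comm x.2 y.2).1 h)
        simp [classFactorRight, hx, hyx]
    rw [Finset.sum_congr rfl fun x _ => hterm x, Set.sum_ite_coe_mem (hP.subset b y)]
    field_simp
  rw [hdiag, Finset.sum_congr rfl fun b _ => hclass b, Finset.sum_const, Finset.card_univ,
    Fintype.card_coe, nsmul_eq_mul, mul_one_div]

end ClassFactorization

theorem gamma2S_le_of_isPartitionFamily {α β : Type*} {Ω : Set α} [Fintype Ω]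
    {P : β → α → Set α} (hP : IsPartitionFamily Ω P) {𝒮 : Set (Set α)} (σ : 𝒮 → β)
    (hσ : ∀ S : 𝒮, ∀ x ∈ (S : Set α), P (σ S) x = S) {s : ℝ} (B : Finset β)
    (hBcard : (B.card : ℝ) ≤ s - 1) (hB : ∀ S : 𝒮, s + 1 ≤ (S : Set α).ncard → σ S ∈ B) :
    gamma2S Ω 𝒮 ≤ √(2 * s) := by
  have hs : 0 ≤ s := by linarith [(Nat.cast_nonneg B.card : (0 : ℝ) ≤ B.card)]
  have hΩ : ∀ S ∈ 𝒮, S ⊆ Ω := fun S hS x hx =>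
    hP.subset (σ ⟨S, hS⟩) x ((hσ ⟨S, hS⟩ x hx).symm ▸ hx)
  calc gamma2S Ω 𝒮 ≤ √(s + 1) * √(1 + B.card / (s + 1)) :=
        gamma2S_le_of_factorization _ _ (sum_classFactorLeft_mul_classFactorRight hs hσ hΩ hB)
          (sum_classFactorLeft_sq_le hs hΩ hB) fun y => (sum_classFactorRight_sq hP hs y).le
    _ ≤ √(2 * s) := by
        rw [← Real.sqrt_mul (by linarith)]
        apply Real.sqrt_le_sqrt
        rw [mul_add, mul_one, mul_div_cancel₀ _ (by linarith)]
        linarith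

theorem Int.exists_ncard_le_sub_add_one {I : Set ℤ} (hI : 0 < I.ncard) :
    ∃ m ∈ I, ∃ M ∈ I, (I.ncard : ℤ) ≤ M - m + 1 := by
  have hfin := Set.finite_of_ncard_pos hI
  have hne := Set.nonempty_of_ncard_ne_zero hI.ne'
  obtain ⟨m, hm, hmin⟩ := I.exists_min_image id hfin hne
  obtain ⟨M, hM, hmax⟩ := I.exists_max_image id hfin hne
  have hIcc : I.ncard ≤ (Finset.Icc m M).card := by
    rw [← Set.ncard_coe_finset]
    exact Set.ncard_le_ncard fun i hi => Finset.mem_Icc.2 ⟨hmin i hi, hmax i hi⟩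
  rw [Int.card_Icc] at hIcc
  exact ⟨m, hm, M, hM, by omega⟩

section IntegerPoints

variable {d : ℕ}

theorem intPoints_finite {A : Set (Fin d → ℝ)} (hA : Bornology.IsBounded A) :
    (intPoints A).Finite := by
  have hiso : Isometry (Pi.map fun (_ : Fin d) (n : ℤ) => (n : ℝ)) :=
    Isometry.piMap _ fun _ => Isometry.of_dist_eq Int.dist_cast_real
  have h := Metric.finite_isBounded_inter_isClosed IsDiscrete.univ
    (hiso.antilipschitz.isBounded_preimage hA) isClosed_univ
  rwa [Set.inter_univ] at h

theorem intCast_add_zsmul (a b : Fin d → ℤ) (i : ℤ) :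
    (fun j => ((a + i • b) j : ℝ)) = (fun j => (a j : ℝ)) + (i : ℝ) • fun j => (b j : ℝ) := by
  funext j
  simp

variable {K : Set (Fin d → ℝ)}

theorem MAPK_eq_of_mem {a b x : Fin d → ℤ} (hx : x ∈ MAPK K a b) : MAPK K x b = MAPK K a b := by
  obtain ⟨⟨i, rfl⟩, -⟩ := hx
  refine congrArg (· ∩ intPoints K) (Set.ext fun z => ⟨?_, ?_⟩)
  · rintro ⟨j, rfl⟩
    exact ⟨i + j, by rw [add_smul, add_assoc]⟩
  · rintro ⟨j, rfl⟩
    exact ⟨j - i, by rw [sub_smul]; abel⟩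

theorem isPartitionFamily_MAPK (K : Set (Fin d → ℝ)) :
    IsPartitionFamily (intPoints K) fun b x => MAPK K x b where
  subset _ _ := Set.inter_subset_right
  mem_self _ _ hx := ⟨⟨0, by simp⟩, hx⟩
  eq_of_mem := MAPK_eq_of_mem

theorem ncard_MAPK_eq_ncard_preimage {a b : Fin d → ℤ} (hb : b ≠ 0) :
    (MAPK K a b).ncard = ((fun i : ℤ => a + i • b) ⁻¹' intPoints K).ncard := by
  have hinj : Function.Injective fun i : ℤ => a + i • b :=
    (add_right_injective a).comp (smul_left_injective ℤ hb)
  rw [← Set.ncard_preimage_of_injective_subset_range hinj]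
  · exact congrArg Set.ncard (Set.ext fun i => ⟨fun h => h.2, fun h => ⟨⟨i, rfl⟩, h⟩⟩)
  · rintro _ ⟨⟨i, rfl⟩, -⟩
    exact ⟨i, rfl⟩

theorem mem_intPoints_smul_sub_of_ncard_MAPK (hK : Convex ℝ K) {s : ℝ} (hs : 0 < s)
    {a b : Fin d → ℤ} (hlong : s + 1 ≤ (MAPK K a b).ncard) :
    b ∈ intPoints ((1 / s) • (K - K)) \ {0} := by
  have htwo : 1 < (MAPK K a b).ncard := by
    have : (1 : ℝ) < (MAPK K a b).ncard := by linarith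
    exact_mod_cast this
  have hb : b ≠ 0 := by
    rintro rfl
    have := Set.ncard_le_ncard (s := MAPK K a 0) (t := {a}) (by rintro _ ⟨⟨i, rfl⟩, -⟩; simp)
    rw [Set.ncard_singleton] at this
    omega
  rw [ncard_MAPK_eq_ncard_preimage hb] at hlong htwo
  obtain ⟨m, hm, M, hM, hmM⟩ := Int.exists_ncard_le_sub_add_one (zero_lt_one.trans htwo)
  have hsMm : s ≤ (M - m : ℝ) := by
    have : (((fun i : ℤ => a + i • b) ⁻¹' intPoints K).ncard : ℝ) ≤ M - m + 1 := by
      exact_mod_cast hmM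
    linarith
  set bR : Fin d → ℝ := fun j => (b j : ℝ)
  have hdiff : (M - m : ℝ) • bR ∈ K - K := by
    refine ⟨_, hM, _, hm, ?_⟩
    simp only [intCast_add_zsmul]
    rw [sub_smul]
    abel
  have hzero : (0 : Fin d → ℝ) ∈ K - K := ⟨_, hm, _, hm, sub_self _⟩
  refine ⟨?_, hb⟩
  show bR ∈ (1 / s) • (K - K)
  rw [Set.mem_smul_set_iff_inv_smul_mem₀ (by positivity), one_div, inv_inv]
  have hMm : (0 : ℝ) < M - m := hs.trans_le hsMm
  have := (hK.sub hK).smul_mem_of_zero_mem hzero hdiff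
    ⟨(div_pos hs hMm).le, (div_le_one hMm).2 hsMm⟩
  rwa [smul_smul, div_mul_cancel₀ _ hMm.ne'] at this

end IntegerPoints

section ConvexBody

variable {d : ℕ} {K : Set (Fin d → ℝ)}

theorem zero_mem_intPoints_smul_sub (hne : K.Nonempty) (t : ℝ) :
    (0 : Fin d → ℤ) ∈ intPoints (t • (K - K)) := by
  simpa [intPoints, ← Pi.zero_def] using Set.smul_mem_smul_set (a := t) hne.zero_mem_sub

theorem gamma2S_MAPK_le (hK : Convex ℝ K) (hKb : Bornology.IsBounded K) (hne : K.Nonempty)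
    {s : ℝ} (hs : 0 < s) (hζ : (zetaSet (K - K) (1 / s) : ℝ) ≤ s) :
    gamma2S (intPoints K) {S | ∃ a b : Fin d → ℤ, S = MAPK K a b} ≤ √(2 * s) := by
  have := (intPoints_finite hKb).fintype
  have hD : (intPoints ((1 / s) • (K - K)) \ {0}).Finite :=
    (intPoints_finite ((hKb.sub hKb).smul₀ _)).sdiff
  choose a σ hσ using fun S : {S | ∃ a b : Fin d → ℤ, S = MAPK K a b} => S.2
  refine gamma2S_le_of_isPartitionFamily (isPartitionFamily_MAPK K) σ ?_ hD.toFinset ?_ ?_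
  · intro S x hx
    rw [hσ S] at hx ⊢
    exact MAPK_eq_of_mem hx
  · have h0 := zero_mem_intPoints_smul_sub hne (1 / s)
    rw [← Set.ncard_eq_toFinset_card _ hD, Set.ncard_sdiff_singleton_of_mem h0,
      Nat.cast_sub ((Set.ncard_pos (intPoints_finite ((hKb.sub hKb).smul₀ _))).2 ⟨0, h0⟩),
      Nat.cast_one]
    exact sub_le_sub_right hζ 1
  · intro S hl
    rw [hσ S] at hl
    exact hD.mem_toFinset.2 (mem_intPoints_smul_sub_of_ncard_MAPK hK hs hl)

theorem exists_zetaSet_sub_le (hK : Convex ℝ K) (hKb : Bornology.IsBounded K)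
    (hne : K.Nonempty) : ∃ s : ℝ, 0 < s ∧ (zetaSet (K - K) (1 / s) : ℝ) ≤ s := by
  set N := (intPoints (K - K)).ncard
  have hsub : (1 / (N + 1 : ℝ)) • (K - K) ⊆ K - K := by
    rintro _ ⟨x, hx, rfl⟩
    exact (hK.sub hK).smul_mem_of_zero_mem hne.zero_mem_sub hx
      ⟨by positivity, (div_le_one (by positivity)).2 (by simp)⟩
  refine ⟨N + 1, by positivity, ?_⟩
  have : zetaSet (K - K) (1 / (N + 1 : ℝ)) ≤ N :=
    Set.ncard_le_ncard (fun _ hx => hsub hx) (intPoints_finite (hKb.sub hKb))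
  linarith [(Nat.cast_le (α := ℝ)).2 this]

end ConvexBody

theorem le_sqrt_two_mul_sqrt_sInf {g : ℝ} {T : Set ℝ} (hT : T.Nonempty)
    (h : ∀ s ∈ T, g ≤ √(2 * s)) : g ≤ √2 * √(sInf T) := by
  rcases le_or_gt g 0 with hg | hg
  · exact hg.trans (by positivity)
  have hsq : g ^ 2 / 2 ≤ sInf T := le_csInf hT fun s hs => by
    have := (Real.le_sqrt' hg).1 (h s hs)
    linarith
  rw [← Real.sqrt_mul zero_le_two, Real.le_sqrt' hg]
  linarith

/-- γ₂ of the system of all maximal APs inside a convex body K is at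
most √2 · f(K). -/
theorem stmt12 (d : ℕ) (K : Set (Fin d → ℝ)) (hK : IsConvexBody K) :
    gamma2S (intPoints K) {S | ∃ a b : Fin d → ℤ, S = MAPK K a b} ≤
      Real.sqrt 2 * fBody K := by
  obtain ⟨hconv, hcomp, hint⟩ := hK
  have hne : K.Nonempty := hint.mono interior_subset
  obtain ⟨s₀, hs₀⟩ := exists_zetaSet_sub_le hconv hcomp.isBounded hne
  exact le_sqrt_two_mul_sqrt_sInf ⟨s₀, hs₀⟩ fun s ⟨hs, hζ⟩ =>
    gamma2S_MAPK_le hconv hcomp.isBounded hne hs hζ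
end

section
/- Let K be a centrally symmetric convex body in ℝ^d (K = −K) and let ζ_K(t) := |ℤ^d ∩ tK|. Then for every real t ≥ 1: ζ_K(1) ≤ ζ_K(t) ≤ 5^d · t^d · ζ_K(1). -/
open scoped Pointwise BigOperators

/-!
If `x, y ∈ tK` are integer points congruent mod `m := ⌈2t⌉`, then by symmetry and convexity
`y - x ∈ tK - tK = 2tK ⊆ mK`, so `(y - x) / m` is an integer point of `K`. Hence each of the
`m ^ d` residue classes mod `m` contains at most `ζ_K(1)` points of `tK`, and `m ≤ 5t`.
-/

open Set Pointwise

section Lattice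

variable {ι : Type*}

lemma sub_eq_smul_ediv_of_intCast_eq {m : ℕ} {x y : ι → ℤ}
    (h : (fun i => (y i : ZMod m)) = fun i => (x i : ZMod m)) :
    y - x = (m : ℤ) • fun i => (y i - x i) / m := by
  funext i
  have hdvd : (m : ℤ) ∣ y i - x i :=
    (ZMod.intCast_eq_intCast_iff_dvd_sub _ _ _).1 (congrFun h i).symm
  exact (Int.mul_ediv_cancel' hdvd).symm

/-- Pigeonhole over the `m ^ card ι` residue classes mod `m`: each class injects into `B`
via `y ↦ (y - x₀) / m`. -/
lemma ncard_le_pow_mul_ncard_of_sub_eq_smul [Fintype ι] {m : ℕ} [NeZero m] {A B : Set (ι → ℤ)}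
    (hA : A.Finite) (hB : B.Finite)
    (h : ∀ x ∈ A, ∀ y ∈ A, ∀ z, y - x = (m : ℤ) • z → z ∈ B) :
    A.ncard ≤ m ^ Fintype.card ι * B.ncard := by
  classical
  set residue : (ι → ℤ) → (ι → ZMod m) := fun x i => (x i : ZMod m)
  have hfiber : ∀ x₀ ∈ A, {y ∈ A | residue y = residue x₀}.ncard ≤ B.ncard := by
    intro x₀ hx₀
    refine ncard_le_ncard_of_injOn (fun y i => (y i - x₀ i) / m) (fun y hy => ?_) ?_ hB
    · exact h x₀ hx₀ y hy.1 _ (sub_eq_smul_ediv_of_intCast_eq hy.2)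
    · intro y hy z hz hyz
      have hsub : y - x₀ = z - x₀ := (sub_eq_smul_ediv_of_intCast_eq hy.2).trans
        ((congrArg _ hyz).trans (sub_eq_smul_ediv_of_intCast_eq hz.2).symm)
      simpa using hsub
  calc A.ncard = hA.toFinset.card := ncard_eq_toFinset_card A hA
    _ ≤ B.ncard * (hA.toFinset.image residue).card := by
      refine Finset.card_le_mul_card_image _ _ fun r hr => ?_
      obtain ⟨x₀, hx₀, rfl⟩ := Finset.mem_image.1 hr
      rw [Finite.mem_toFinset] at hx₀
      calc _ = {y ∈ A | residue y = residue x₀}.ncard := by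
            rw [← ncard_coe_finset]; congr 1; ext; simp
        _ ≤ B.ncard := hfiber x₀ hx₀
    _ ≤ B.ncard * m ^ Fintype.card ι := by
      gcongr
      simpa using Finset.card_le_univ (hA.toFinset.image residue)
    _ = m ^ Fintype.card ι * B.ncard := mul_comm _ _

end Lattice

lemma intPoints_mono {d : ℕ} {A B : Set (Fin d → ℝ)} (h : A ⊆ B) : intPoints A ⊆ intPoints B :=
  fun _ hx => h hx

lemma IsCompact.finite_intPoints {d : ℕ} {A : Set (Fin d → ℝ)} (hA : IsCompact A) :
    (intPoints A).Finite :=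
  ((Topology.IsClosedEmbedding.piMap fun _ => Real.isClosedEmbedding_intCast).isCompact_preimage
    hA).finite_of_discrete

lemma Convex.balanced_of_neg_eq {E : Type*} [AddCommGroup E] [Module ℝ E] {K : Set E}
    (hK : Convex ℝ K) (hsym : K = -K) : Balanced ℝ K :=
  (balanced_iff_neg_mem hK).2 fun x hx => by rwa [hsym, neg_mem_neg]

lemma Balanced.smul_sub_mem {E : Type*} [AddCommGroup E] [Module ℝ E] {K : Set E}
    (hbal : Balanced ℝ K) (hK : Convex ℝ K) {a b : E} (ha : a ∈ K) (hb : b ∈ K) {c : ℝ}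
    (hc : 2 * |c| ≤ 1) : c • (b - a) ∈ K := by
  have hmid : (1 / 2 : ℝ) • b + (1 / 2 : ℝ) • -a ∈ K :=
    hK hb (hbal.neg_mem_iff.2 ha) (by norm_num) (by norm_num) (by norm_num)
  have hsplit : c • (b - a) = (2 * c) • ((1 / 2 : ℝ) • b + (1 / 2 : ℝ) • -a) := by module
  rw [hsplit]
  exact hbal.smul_mem (by rwa [Real.norm_eq_abs, abs_mul, abs_two]) hmid

lemma mem_intPoints_of_sub_eq_smul {d : ℕ} {K : Set (Fin d → ℝ)} (hbal : Balanced ℝ K)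
    (hK : Convex ℝ K) {t : ℝ} (ht : 0 < t) {m : ℕ} (hm : 2 * t ≤ m) {x y z : Fin d → ℤ}
    (hx : x ∈ intPoints (t • K)) (hy : y ∈ intPoints (t • K)) (hz : y - x = (m : ℤ) • z) :
    z ∈ intPoints K := by
  obtain ⟨a, ha, hxa⟩ := hx
  obtain ⟨b, hb, hyb⟩ := hy
  have hm0 : (0 : ℝ) < m := by linarith
  have hza : (fun i => (z i : ℝ)) = (t / m) • (b - a) := by
    funext i
    have hzi : (y i : ℝ) - x i = m * z i := by exact_mod_cast congrFun hz i
    have hxi : t * a i = x i := congrFun hxa i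
    have hyi : t * b i = y i := congrFun hyb i
    simp only [Pi.smul_apply, Pi.sub_apply, smul_eq_mul]
    field_simp
    linarith
  show (fun i => (z i : ℝ)) ∈ K
  rw [hza]
  refine hbal.smul_sub_mem hK ha hb ?_
  rw [abs_of_pos (by positivity), mul_div_assoc', div_le_one hm0]
  exact hm

/-- for a centrally symmetric convex body K and t ≥ 1,
ζ_K(1) ≤ ζ_K(t) ≤ 5^d t^d ζ_K(1). -/
theorem stmt14 (d : ℕ) (K : Set (Fin d → ℝ)) (hK : IsConvexBody K) (hsym : K = -K)
    (t : ℝ) (ht : 1 ≤ t) :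
    zetaSet K 1 ≤ zetaSet K t ∧
      (zetaSet K t : ℝ) ≤ 5 ^ d * t ^ d * (zetaSet K 1 : ℝ) := by
  obtain ⟨hconv, hcomp, -⟩ := hK
  have ht0 : 0 < t := by linarith
  have hbal := hconv.balanced_of_neg_eq hsym
  have hfin : (intPoints (t • K)).Finite := (hcomp.smul t).finite_intPoints
  have hsub : intPoints ((1 : ℝ) • K) ⊆ intPoints (t • K) := by
    rw [one_smul]
    exact intPoints_mono (hbal.subset_smul (by rwa [Real.norm_of_nonneg ht0.le]))
  refine ⟨ncard_le_ncard hsub hfin, ?_⟩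
  set m := ⌈2 * t⌉₊
  have hm : 2 * t ≤ m := Nat.le_ceil _
  have hm5 : (m : ℝ) ≤ 5 * t := by linarith [Nat.ceil_lt_add_one (by linarith : 0 ≤ 2 * t)]
  have : NeZero m := ⟨(Nat.ceil_pos.2 (by linarith)).ne'⟩
  have hcount := ncard_le_pow_mul_ncard_of_sub_eq_smul hfin (hfin.subset hsub)
    fun x hx y hy z hz => by
      rw [one_smul]
      exact mem_intPoints_of_sub_eq_smul hbal hconv ht0 hm hx hy hz
  rw [Fintype.card_fin] at hcount
  calc (zetaSet K t : ℝ) ≤ (m : ℝ) ^ d * zetaSet K 1 := by exact_mod_cast hcount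
    _ ≤ (5 * t) ^ d * zetaSet K 1 := by gcongr
    _ = 5 ^ d * t ^ d * zetaSet K 1 := by rw [mul_pow]
end

section
/- Let d be a positive integer and N = (N_1, …, N_d) with N_1 ≥ N_2 ≥ ⋯ ≥ N_d ≥ 2 and N_1 even. Let N' = (N_1/2, N_2, …, N_d). Then f(N') ≤ 2^{−1/((2d+2)(2d+4))} · f(N). -/
open scoped Pointwise BigOperators

/-!
Every term of the supremum defining `f(N')` is at most `2^{-δ}`, `δ = 1/((2d+2)(2d+4))`, times a
term of `f(N)`. If the halved coordinate `z` lies in `I`, the `I`-term itself drops by the factor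
`2^{-1/(2|I|+2)}`. Otherwise compare it with the `(I ∪ {z})`-term of `N`: as `N_z` is maximal,
`∏_I N_i ≤ N_z^{|I|}`, so trading the exponent `1/(2|I|+2)` for `1/(2|I|+4)` while multiplying
by `N_z ≥ 2` gains at least the factor `2^{2/((2|I|+2)(2|I|+4))}`.
-/

section Arithmetic

theorem div_two_rpow_le_two_rpow_neg_mul {P e δ : ℝ} (hP : 0 ≤ P) (hδe : δ ≤ e) :
    (P / 2) ^ e ≤ 2 ^ (-δ) * P ^ e := by
  rw [Real.div_rpow hP zero_le_two, div_eq_inv_mul, ← Real.rpow_neg zero_le_two]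
  gcongr
  exact one_le_two

theorem div_le_neg_div_add_div_of_le_mul {x k l L D : ℝ} (hk : 0 ≤ k) (hkD : k + 1 ≤ D)
    (hl : 0 < l) (hlL : l ≤ L) (hx : x ≤ k * L) :
    x / (2 * k + 2) ≤ -l / ((2 * D + 2) * (2 * D + 4)) + (L + x) / (2 * (k + 1) + 2) := by
  have hD : 0 < D := by linarith
  set X := (2 * D + 2) * (2 * D + 4)
  have hX : (2 * k + 2) * (2 * k + 4) ≤ 2 * X := by nlinarith
  have hgap : 2 * l ≤ (2 * k + 2) * L - 2 * x := by nlinarith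
  rw [div_add_div _ _ (by positivity) (by positivity), div_le_div_iff₀ (by positivity) (by positivity)]
  nlinarith [mul_le_mul_of_nonneg_left hgap (by positivity : 0 ≤ X),
    mul_le_mul_of_nonneg_right hX hl.le]

theorem rpow_le_two_rpow_mul_mul_rpow {a P D : ℝ} {k : ℕ} (ha : 2 ≤ a) (hP : 0 < P)
    (hPa : P ≤ a ^ k) (hkD : (k : ℝ) + 1 ≤ D) :
    P ^ (1 / (2 * (k : ℝ) + 2)) ≤
      2 ^ (-1 / ((2 * D + 2) * (2 * D + 4))) * (a * P) ^ (1 / (2 * ((k : ℝ) + 1) + 2)) := by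
  have ha0 : 0 < a := by linarith
  rw [← Real.log_le_log_iff (by positivity) (by positivity), Real.log_mul (by positivity)
    (by positivity), Real.log_rpow hP, Real.log_rpow two_pos, Real.log_rpow (by positivity),
    Real.log_mul ha0.ne' hP.ne']
  have hlog : Real.log P ≤ k * Real.log a := by
    rw [← Real.log_pow]
    exact Real.log_le_log hP hPa
  have := div_le_neg_div_add_div_of_le_mul (Nat.cast_nonneg k) hkD (Real.log_pos one_lt_two)
    (Real.log_le_log two_pos ha) hlog
  convert this using 2 <;> ring

end Arithmetic

section fVec

variable {d : ℕ}

noncomputable def fVecTerm (N : Fin d → ℤ) (I : Finset (Fin d)) : ℝ :=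
  (∏ i ∈ I, (N i : ℝ)) ^ ((1 : ℝ) / (2 * (I.card : ℝ) + 2))

theorem fVecTerm_le_fVec (N : Fin d → ℤ) (I : Finset (Fin d)) : fVecTerm N I ≤ fVec N :=
  le_ciSup (Set.finite_range _).bddAbove I

theorem fVec_le_mul_of_forall_exists {N N' : Fin d → ℤ} {c : ℝ} (hc : 0 ≤ c)
    (h : ∀ I, ∃ J, fVecTerm N' I ≤ c * fVecTerm N J) : fVec N' ≤ c * fVec N :=
  ciSup_le fun I =>
    let ⟨J, hJ⟩ := h I
    hJ.trans (mul_le_mul_of_nonneg_left (fVecTerm_le_fVec N J) hc)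

theorem fVec_update_div_two_le (N : Fin d → ℤ) (z : Fin d) (hpos : ∀ i, 0 < N i)
    (hmax : ∀ i, N i ≤ N z) (h2 : 2 ≤ N z) (heven : 2 ∣ N z) :
    fVec (Function.update N z (N z / 2)) ≤
      (2 : ℝ) ^ (-(1 : ℝ) / ((2 * (d : ℝ) + 2) * (2 * (d : ℝ) + 4))) * fVec N := by
  classical
  have hhalf : ((N z / 2 : ℤ) : ℝ) = (N z : ℝ) / 2 := by
    rw [Int.cast_div heven (by norm_num)]
    norm_num
  have hcast : (fun i => (Function.update N z (N z / 2) i : ℝ)) =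
      Function.update (fun i => (N i : ℝ)) z ((N z : ℝ) / 2) := by
    ext i
    rw [Function.apply_update (fun _ (n : ℤ) => (n : ℝ)) N z, hhalf]
  have hprod_pos : ∀ I : Finset (Fin d), 0 < ∏ i ∈ I, (N i : ℝ) := fun I =>
    Finset.prod_pos fun i _ => Int.cast_pos.mpr (hpos i)
  refine fVec_le_mul_of_forall_exists (by positivity) fun I => ?_
  by_cases hz : z ∈ I
  · refine ⟨I, ?_⟩
    have hcard : (I.card : ℝ) ≤ d := by exact_mod_cast card_finset_fin_le I
    have hprod : ∏ i ∈ I, (Function.update N z (N z / 2) i : ℝ) = (∏ i ∈ I, (N i : ℝ)) / 2 := by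
      rw [hcast, Finset.prod_update_of_mem hz, Finset.prod_eq_mul_prod_sdiff_singleton_of_mem hz]
      ring
    rw [fVecTerm, fVecTerm, hprod, neg_div]
    refine div_two_rpow_le_two_rpow_neg_mul (hprod_pos I).le ?_
    gcongr
    nlinarith
  · refine ⟨insert z I, ?_⟩
    have hcard' : (I.card : ℝ) + 1 ≤ d := by
      exact_mod_cast Finset.card_insert_of_notMem hz ▸ card_finset_fin_le (insert z I)
    have hle : ∏ i ∈ I, (N i : ℝ) ≤ (N z : ℝ) ^ I.card := by
      rw [← Finset.prod_const]
      exact Finset.prod_le_prod (fun i _ => (Int.cast_pos.mpr (hpos i)).le)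
        fun i _ => Int.cast_le.mpr (hmax i)
    rw [fVecTerm, fVecTerm, hcast, Finset.prod_update_of_notMem hz, Finset.prod_insert hz,
      Finset.card_insert_of_notMem hz, Nat.cast_succ]
    exact rpow_le_two_rpow_mul_mul_rpow (by exact_mod_cast h2) (hprod_pos I) hle hcard'

end fVec

/-- halving the largest side length decreases f by a definite factor:
f(N') ≤ 2^{−1/((2d+2)(2d+4))} f(N). -/
theorem stmt18 (d : ℕ) (hd : 0 < d) (N : Fin d → ℤ)
    (hmono : ∀ i j : Fin d, i ≤ j → N j ≤ N i) (h2 : ∀ i, 2 ≤ N i)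
    (heven : 2 ∣ N ⟨0, hd⟩) :
    fVec (Function.update N ⟨0, hd⟩ (N ⟨0, hd⟩ / 2)) ≤
      (2 : ℝ) ^ (-(1 : ℝ) / ((2 * (d : ℝ) + 2) * (2 * (d : ℝ) + 4))) * fVec N :=
  fVec_update_div_two_le N ⟨0, hd⟩ (fun i => by linarith [h2 i])
    (fun i => hmono _ i (Nat.zero_le i.val)) (h2 _) heven
end
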